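/- arXiv:2601.22950 — 2 statements merged into one kernel-verified Lean document; each statement's English description precedes it below -/
import Mathlib

section
/- Define pplx(a, γ) := −a·log(1−γ) − (1−a)·log(γ) with log the natural logarithm. Let 0 < Δ < γ < 1/2 and set a' := (pplx(1/2, γ) + log(γ−Δ)) / (log(γ−Δ) − log(1−γ+Δ)). Then a' > 1/2. -/
noncomputable def pplx (a γ : ℝ) : ℝ := -a * Real.log (1 - γ) - (1 - a) * Real.log γ

theorem stmt_13 (γ Δ : ℝ) (hΔ0 : 0 < Δ) (hΔγ : Δ < γ) (hγ : γ < 1 / 2) :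
    (pplx (1 / 2) γ + Real.log (γ - Δ)) / (Real.log (γ - Δ) - Real.log (1 - γ + Δ))
      > 1 / 2 := by
  have hx0 : (0:ℝ) < γ - Δ := by linarith
  have hγ0 : (0:ℝ) < γ := by linarith
  have hy0 : (0:ℝ) < 1 - γ + Δ := by linarith
  have h1γ : (0:ℝ) < 1 - γ := by linarith
  have hxy : γ - Δ < 1 - γ + Δ := by linarith
  have hd : Real.log (γ - Δ) - Real.log (1 - γ + Δ) < 0 := by
    have := Real.log_lt_log hx0 hxy
    linarith
  have hkey : Real.log ((γ - Δ) * (1 - γ + Δ)) < Real.log (γ * (1 - γ)) := by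
    apply Real.log_lt_log (by positivity)
    nlinarith
  rw [Real.log_mul (ne_of_gt hx0) (ne_of_gt hy0),
      Real.log_mul (ne_of_gt hγ0) (ne_of_gt h1γ)] at hkey
  rw [gt_iff_lt, lt_div_iff_of_neg hd]
  simp only [pplx]
  ring_nf
  nlinarith [hkey]
end

section
/- Define pplx(a, γ) := −a·log(1−γ) − (1−a)·log(γ) with log the natural logarithm. Let a ∈ (1/2, 1), let γ satisfy 1 − a < γ < 1/2, and let Δ satisfy 0 < Δ < γ − (1 − a). Set a' := (pplx(a, γ) + log(γ−Δ)) / (log(γ−Δ) − log(1−γ+Δ)). Then a' < a. -/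
/-!
Clearing the negative denominator `log (γ - Δ) - log (1 - (γ - Δ))` turns the claim into
`pplx a (γ - Δ) < pplx a γ`. Since `∂γ pplx a γ = (γ - (1 - a)) / (γ (1 - γ))`, the perplexity
is strictly increasing for `γ ≥ 1 - a`, and `1 - a < γ - Δ < γ`.
-/

open Set Real

theorem hasDerivAt_pplx (a : ℝ) {x : ℝ} (hx0 : 0 < x) (hx1 : x < 1) :
    HasDerivAt (pplx a) ((x - (1 - a)) / (x * (1 - x))) x := by
  have hlog₁ : HasDerivAt (fun y => log (1 - y)) (-1 / (1 - x)) x := by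
    simpa using ((hasDerivAt_id x).const_sub 1).log (sub_pos.2 hx1).ne'
  have h : HasDerivAt (pplx a) (-a * (-1 / (1 - x)) - (1 - a) * x⁻¹) x :=
    (hlog₁.const_mul (-a)).sub ((hasDerivAt_log hx0.ne').const_mul (1 - a))
  refine h.congr_deriv ?_
  have := (sub_pos.2 hx1).ne'
  field_simp
  ring

theorem strictMonoOn_pplx {a : ℝ} (ha : a < 1) : StrictMonoOn (pplx a) (Ico (1 - a) 1) := by
  have hderiv : ∀ x ∈ Ico (1 - a) 1,
      HasDerivAt (pplx a) ((x - (1 - a)) / (x * (1 - x))) x :=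
    fun x hx => hasDerivAt_pplx a (by linarith [hx.1]) hx.2
  refine strictMonoOn_of_deriv_pos (convex_Ico _ _)
    (fun x hx => (hderiv x hx).continuousAt.continuousWithinAt) fun x hx => ?_
  rw [interior_Ico] at hx
  rw [(hderiv x (Ioo_subset_Ico_self hx)).deriv]
  have hx0 : 0 < x := by linarith [hx.1]
  have hx1 : 0 < 1 - x := by linarith [hx.2]
  exact div_pos (by linarith [hx.1]) (by positivity)

theorem stmt_14_general (a γ Δ : ℝ) (ha1 : a < 1)
    (hγlo : 1 - a < γ) (hγ : γ < 1 / 2) (hΔ0 : 0 < Δ) (hΔ : Δ < γ - (1 - a)) :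
    (pplx a γ + Real.log (γ - Δ)) / (Real.log (γ - Δ) - Real.log (1 - γ + Δ)) < a := by
  have hmono : pplx a (γ - Δ) < pplx a γ :=
    strictMonoOn_pplx ha1 ⟨by linarith, by linarith⟩ ⟨hγlo.le, by linarith⟩ (by linarith)
  have hden : log (γ - Δ) - log (1 - γ + Δ) < 0 :=
    sub_neg.2 (log_lt_log (by linarith) (by linarith))
  rw [div_lt_iff_of_neg hden, show 1 - γ + Δ = 1 - (γ - Δ) by ring]
  unfold pplx at hmono ⊢
  linarith

theorem stmt_14 (a γ Δ : ℝ) (ha : 1 / 2 < a) (ha1 : a < 1)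
    (hγlo : 1 - a < γ) (hγ : γ < 1 / 2) (hΔ0 : 0 < Δ) (hΔ : Δ < γ - (1 - a)) :
    (pplx a γ + Real.log (γ - Δ)) / (Real.log (γ - Δ) - Real.log (1 - γ + Δ)) < a :=
  stmt_14_general a γ Δ ha1 hγlo hγ hΔ0 hΔ
end
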